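/- For every n ≥ 0, ∑_{k=0}^{n} L*_{2k+1}(1,-1,q) / ((q;q)_{n-k} (q;q)_{n+k+1}) = 1/(q;q)_{2n+1}. -/

import Mathlib

/-!
Multiplying by `(q;q)_{2n+1}` turns the claim into `∑_k L_{2k+1} [2n+1, n-k] = 1`.
With `f(m) = ∑_i (-1)^i q^(i(i-1)/2) [m-i, i]` one has `L_{m+2} = f(m+2) - q^(m+1) f(m)`, and the
two q-Pascal rules give `f(m+3) = -q^(m+1) f(m)`. Hence `L_{2k+1}` is, according to `k mod 3`,
`±` one or two powers of `q` whose exponents are pentagonal numbers `j(3j+1)/2`, and the sum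
becomes the finite form of Euler's pentagonal number theorem
`∑_j (-1)^j q^(j(3j+1)/2) [N, ⌊(N-3j)/2⌋] = 1`. That identity is proved by induction on `N`:
expanding with the q-Pascal rules, the contributions of `j` and `j + 1` cancel in pairs.
-/

open Finset

noncomputable section

abbrev K : Type := RatFunc ℚ

def q : K := RatFunc.X

def qint (a : K) (m : ℕ) : K := ∑ i ∈ range m, a ^ i

def qfact (a : K) (m : ℕ) : K := ∏ i ∈ range m, qint a (i + 1)

def qbinom (a : K) (n k : ℕ) : K :=
  if k ≤ n then qfact a n / (qfact a k * qfact a (n - k)) else 0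

/-- q-Fibonacci polynomials F_n(x,s,q) with base `a`. -/
def qF (a x s : K) : ℕ → K
  | 0 => 0
  | n + 1 => ∑ k ∈ range (n / 2 + 1),
      a ^ (k * (k + 1) / 2) * qbinom a (n - k) k * s ^ k * x ^ (n - 2 * k)

/-- q-Lucas polynomials L_n(x,s,q) with base `a` (L_0 = 2). -/
def qL (a x s : K) (n : ℕ) : K :=
  if n = 0 then 2 else
  ∑ k ∈ range (n / 2 + 1),
    a ^ (k * (k - 1) / 2) * (qint a n / qint a (n - k)) * qbinom a (n - k) k
      * s ^ k * x ^ (n - 2 * k)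

/-- Starred variant: L*_0 = 1, L*_n = L_n for n > 0. -/
def qLs (a x s : K) (n : ℕ) : K := if n = 0 then 1 else qL a x s n

/-- Rogers-Szegő polynomial. -/
def rs (a x y : K) (m : ℕ) : K := ∑ j ∈ range (m + 1), qbinom a m j * x ^ j * y ^ (m - j)

/-- q-Pochhammer (q;q)_m. -/
def qpoch (a : K) (m : ℕ) : K := ∏ j ∈ range m, (1 - a ^ (j + 1))


lemma sum_range_mul_eq_sum_sum {M : Type*} [AddCommMonoid M] (f : ℕ → M) (m L : ℕ) :
    ∑ t ∈ range (m * L), f t = ∑ s ∈ range L, ∑ r ∈ range m, f (m * s + r) := by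
  induction L with
  | zero => simp
  | succ L ih => rw [mul_add_one, sum_range_add, ih, sum_range_succ]

lemma sum_range_two_mul_sub {M : Type*} [AddCommMonoid M] (f : ℤ → M) (L : ℕ) :
    ∑ t ∈ range (2 * L), f (t - L) = ∑ t ∈ range L, (f t + f (-(t + 1))) := by
  rw [two_mul, sum_range_add, sum_add_distrib, add_comm]
  congr 1
  · simp
  · rw [← sum_range_reflect]
    refine sum_congr rfl fun t ht => ?_
    rw [mem_range] at ht
    congr 1
    omega

lemma choose_two_succ (i : ℕ) : (i + 1).choose 2 = i + i.choose 2 := by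
  rw [Nat.choose_succ_succ', Nat.choose_one_right]

lemma qint_add (x : K) (a b : ℕ) : qint x (a + b) = qint x a + x ^ a * qint x b := by
  simp only [qint, sum_range_add, pow_add, mul_sum]

lemma qfact_succ (x : K) (m : ℕ) : qfact x (m + 1) = qfact x m * qint x (m + 1) :=
  prod_range_succ _ _

lemma qpoch_eq_pow_mul_qfact (x : K) (m : ℕ) : qpoch x m = (1 - x) ^ m * qfact x m := by
  induction m with
  | zero => simp [qpoch, qfact]
  | succ m ih =>
    rw [qpoch, prod_range_succ, ← qpoch, ih, qfact_succ, qint, ← mul_neg_geom_sum]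
    ring

lemma qbinom_of_lt (x : K) {n k : ℕ} (h : n < k) : qbinom x n k = 0 := if_neg (by omega)

lemma q_ne_zero : q ≠ 0 := RatFunc.X_ne_zero

lemma one_sub_q_ne_zero : 1 - q ≠ 0 := by
  have hpoly : (1 - Polynomial.X : Polynomial ℚ) ≠ 0 := fun h => by
    simpa using congrArg (Polynomial.eval 0) h
  simpa [q] using (map_ne_zero_iff _ (RatFunc.algebraMap_injective ℚ)).2 hpoly

lemma qint_q_ne_zero {m : ℕ} (hm : m ≠ 0) : qint q m ≠ 0 := by
  have hpoly : (∑ i ∈ range m, (Polynomial.X : Polynomial ℚ) ^ i) ≠ 0 := fun h => by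
    simpa [Polynomial.eval_finsetSum, hm] using congrArg (Polynomial.eval 1) h
  simpa [qint, q, map_sum] using (map_ne_zero_iff _ (RatFunc.algebraMap_injective ℚ)).2 hpoly

lemma qfact_q_ne_zero (m : ℕ) : qfact q m ≠ 0 :=
  prod_ne_zero_iff.2 fun i _ => qint_q_ne_zero i.succ_ne_zero

lemma qbinom_eq_div_of_eq_add {n a b : ℕ} (h : n = a + b) :
    qbinom q n a = qfact q n / (qfact q a * qfact q b) := by
  subst h
  rw [qbinom, if_pos (by omega), Nat.add_sub_cancel_left]

lemma qbinom_symm_of_eq_add {n a b : ℕ} (h : n = a + b) : qbinom q n a = qbinom q n b := by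
  rw [qbinom_eq_div_of_eq_add h, qbinom_eq_div_of_eq_add (h.trans (add_comm a b)), mul_comm]

lemma qbinom_symm {n k : ℕ} (h : k ≤ n) : qbinom q n k = qbinom q n (n - k) :=
  qbinom_symm_of_eq_add (by omega)

lemma qbinom_zero_right (n : ℕ) : qbinom q n 0 = 1 := by
  rw [qbinom_eq_div_of_eq_add (zero_add n).symm, show qfact q 0 = 1 from prod_range_zero _,
    one_mul, div_self (qfact_q_ne_zero _)]

lemma qbinom_self (n : ℕ) : qbinom q n n = 1 := by
  rw [← qbinom_symm_of_eq_add (zero_add n).symm, qbinom_zero_right]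

lemma qbinom_succ_succ (n k : ℕ) :
    qbinom q (n + 1) (k + 1) = qbinom q n k + q ^ (k + 1) * qbinom q n (k + 1) := by
  rcases lt_trichotomy n k with h | rfl | h
  · rw [qbinom_of_lt _ (by omega), qbinom_of_lt _ h, qbinom_of_lt _ (by omega)]
    ring
  · rw [qbinom_self, qbinom_self, qbinom_of_lt _ (by omega)]
    ring
  obtain ⟨r, rfl⟩ := Nat.exists_eq_add_of_lt h
  have hsplit : qint q (k + r + 1 + 1) = qint q (k + 1) + q ^ (k + 1) * qint q (r + 1) := by
    rw [← qint_add]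
    ring_nf
  rw [qbinom_eq_div_of_eq_add (show k + r + 1 + 1 = (k + 1) + (r + 1) by ring),
    qbinom_eq_div_of_eq_add (show k + r + 1 = k + (r + 1) by ring),
    qbinom_eq_div_of_eq_add (show k + r + 1 = (k + 1) + r by ring),
    qfact_succ _ (k + r + 1), qfact_succ _ k, qfact_succ _ r, hsplit]
  have := qfact_q_ne_zero k
  have := qfact_q_ne_zero r
  have := qint_q_ne_zero k.succ_ne_zero
  have := qint_q_ne_zero r.succ_ne_zero
  field_simp

lemma qbinom_add_succ_succ (n k : ℕ) :
    qbinom q (n + k + 1) (k + 1) = qbinom q (n + k) (k + 1) + q ^ n * qbinom q (n + k) k := by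
  rcases n with _ | n
  · rw [zero_add, qbinom_self, qbinom_self, qbinom_of_lt _ (by omega)]
    ring
  rw [show n + 1 + k + 1 = n + k + 1 + 1 by ring, show n + 1 + k = n + k + 1 by ring,
    qbinom_symm_of_eq_add (show n + k + 1 + 1 = (k + 1) + (n + 1) by ring), qbinom_succ_succ,
    qbinom_symm_of_eq_add (show n + k + 1 = n + (k + 1) by ring),
    qbinom_symm_of_eq_add (show n + k + 1 = (n + 1) + k by ring)]

def qbinomZ (n : ℕ) (m : ℤ) : K := if 0 ≤ m then qbinom q n m.toNat else 0

lemma qbinomZ_of_neg {n : ℕ} {m : ℤ} (h : m < 0) : qbinomZ n m = 0 := if_neg (by omega)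

@[simp]
lemma qbinomZ_natCast (n k : ℕ) : qbinomZ n k = qbinom q n k := by
  rw [qbinomZ, if_pos (by omega), Int.toNat_natCast]

lemma qbinomZ_of_lt {n : ℕ} {m : ℤ} (h : (n : ℤ) < m) : qbinomZ n m = 0 := by
  lift m to ℕ using (by omega)
  rw [qbinomZ_natCast, qbinom_of_lt _ (by omega)]

lemma qbinomZ_zero_right (n : ℕ) : qbinomZ n 0 = 1 := by
  simpa [qbinom_zero_right] using qbinomZ_natCast n 0

lemma qbinomZ_symm (n : ℕ) (m : ℤ) : qbinomZ n m = qbinomZ n (n - m) := by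
  rcases lt_or_ge m 0 with h | h
  · rw [qbinomZ_of_neg h, qbinomZ_of_lt (by omega)]
  rcases lt_or_ge (n : ℤ) m with h' | h'
  · rw [qbinomZ_of_lt h', qbinomZ_of_neg (by omega)]
  lift m to ℕ using h
  rw [show (n : ℤ) - m = ((n - m : ℕ) : ℤ) by omega, qbinomZ_natCast, qbinomZ_natCast,
    qbinom_symm (by omega)]

lemma qbinomZ_succ (n : ℕ) (m : ℤ) :
    qbinomZ (n + 1) m = qbinomZ n (m - 1) + q ^ m * qbinomZ n m := by
  rcases lt_trichotomy m 0 with h | rfl | h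
  · rw [qbinomZ_of_neg h, qbinomZ_of_neg (by omega), qbinomZ_of_neg h]
    ring
  · rw [qbinomZ_zero_right, qbinomZ_zero_right, qbinomZ_of_neg (by omega), zpow_zero]
    ring
  obtain ⟨k, rfl⟩ : ∃ k : ℕ, m = k + 1 := ⟨m.toNat - 1, by omega⟩
  rw [add_sub_cancel_right, show (k : ℤ) + 1 = ((k + 1 : ℕ) : ℤ) by push_cast; ring,
    zpow_natCast]
  simp only [qbinomZ_natCast, qbinom_succ_succ]

lemma qbinomZ_succ' (n : ℕ) (m : ℤ) :
    qbinomZ (n + 1) m = qbinomZ n m + q ^ ((n : ℤ) + 1 - m) * qbinomZ n (m - 1) := by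
  rw [qbinomZ_symm, qbinomZ_succ, qbinomZ_symm n m, qbinomZ_symm n (m - 1)]
  push_cast
  ring_nf

/-- `(N - 3 * j) / 2` rounds down when `N - 3 * j` is odd. -/
def pentagonalTerm (N : ℕ) (j : ℤ) : K :=
  (-1) ^ j * q ^ (j * (3 * j + 1) / 2) * qbinomZ N ((N - 3 * j) / 2)

def pentagonalSum (M N : ℕ) : K :=
  ∑ t ∈ range M, (pentagonalTerm N t + pentagonalTerm N (-(t + 1)))

lemma pentagonalTerm_eq {N : ℕ} {j m : ℤ} {e : ℕ} (he : j * (3 * j + 1) = 2 * e)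
    (hm : (N - 3 * j) / 2 = m) : pentagonalTerm N j = (-1) ^ j * q ^ e * qbinomZ N m := by
  rw [pentagonalTerm, hm, he, Int.mul_ediv_cancel_left _ two_ne_zero, zpow_natCast]

lemma pentagonalTerm_eq_zero {N : ℕ} {j : ℤ} (h : (N : ℤ) < 3 * j ∨ 3 * j < -N - 1) :
    pentagonalTerm N j = 0 := by
  rw [pentagonalTerm]
  rcases h with h | h
  · rw [qbinomZ_of_neg (by omega), mul_zero]
  · rw [qbinomZ_of_lt (by omega), mul_zero]

/-- Expanding `[N + 1, ·]` by the two q-Pascal rules, both terms leave a multiple of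
`[N, (N - 3 * j) / 2 - 1]`, with opposite signs and equal powers of `q`. -/
lemma pentagonalTerm_succ_pair {N : ℕ} {j : ℤ} (hj : Even (j + N)) :
    pentagonalTerm (N + 1) j + pentagonalTerm (N + 1) (j + 1)
      = pentagonalTerm N j + pentagonalTerm N (j + 1) := by
  obtain ⟨m, hm⟩ : ∃ m : ℤ, N - 3 * j = 2 * m := by
    obtain ⟨r, hr⟩ := hj
    exact ⟨r - 2 * j, by omega⟩
  set e := j * (3 * j + 1) / 2
  have he : (j + 1) * (3 * (j + 1) + 1) / 2 = e + 3 * j + 2 := by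
    have : (j + 1) * (3 * (j + 1) + 1) = j * (3 * j + 1) + 2 * (3 * j + 2) := by ring
    omega
  have hsign : (-1 : K) ^ (j + 1) = -(-1) ^ j := by
    rw [zpow_add_one₀ (by norm_num)]
    ring
  have hpow : q ^ e * q ^ ((N : ℤ) + 1 - m) = q ^ (e + 3 * j + 2) * q ^ (m - 1) := by
    rw [← zpow_add₀ q_ne_zero, ← zpow_add₀ q_ne_zero]
    congr 1
    omega
  simp only [pentagonalTerm, he, hsign]
  push_cast
  rw [show ((N : ℤ) + 1 - 3 * j) / 2 = m by omega,
    show ((N : ℤ) + 1 - 3 * (j + 1)) / 2 = m - 1 by omega,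
    show ((N : ℤ) - 3 * j) / 2 = m by omega, show ((N : ℤ) - 3 * (j + 1)) / 2 = m - 2 by omega,
    qbinomZ_succ' N m, qbinomZ_succ N (m - 1), show m - 1 - 1 = m - 2 by ring]
  linear_combination (-1) ^ j * qbinomZ N (m - 1) * hpow

lemma pentagonalSum_succ_of_lt {M N : ℕ} (h : N < M) :
    pentagonalSum (M + 1) N = pentagonalSum M N := by
  rw [pentagonalSum, sum_range_succ, ← pentagonalSum,
    pentagonalTerm_eq_zero (by omega), pentagonalTerm_eq_zero (by omega)]
  ring

lemma pentagonalSum_eq_of_lt {M N : ℕ} (h : N < M) :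
    pentagonalSum M N = pentagonalSum (N + 1) N := by
  induction M, h using Nat.le_induction with
  | base => rfl
  | succ M hM ih => rw [pentagonalSum_succ_of_lt (by omega), ih]

lemma pentagonalSum_succ_right (N : ℕ) :
    pentagonalSum (N + 2) (N + 1) = pentagonalSum (N + 2) N := by
  rw [pentagonalSum, pentagonalSum, ← sum_range_two_mul_sub, ← sum_range_two_mul_sub,
    sum_range_mul_eq_sum_sum, sum_range_mul_eq_sum_sum]
  refine sum_congr rfl fun s _ => ?_
  simp only [sum_range_succ, sum_range_zero, zero_add, add_zero]
  have h := pentagonalTerm_succ_pair (N := N) (j := 2 * s - (N + 2)) ⟨s - 1, by ring⟩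
  push_cast at h ⊢
  rw [show (2 * s + 1 : ℤ) - (N + 2) = 2 * s - (N + 2) + 1 by ring, h]

lemma pentagonalSum_succ_self (N : ℕ) : pentagonalSum (N + 1) N = 1 := by
  induction N with
  | zero => simp [pentagonalSum, pentagonalTerm, qbinomZ_zero_right, qbinomZ_of_lt]
  | succ N ih => rw [pentagonalSum_succ_right, pentagonalSum_succ_of_lt (by omega), ih]

def diagSum (f : ℕ → K) (m : ℕ) : K := ∑ i ∈ range (m / 2 + 1), f i * qbinom q (m - i) i

lemma diagSum_eq_sum_range (f : ℕ → K) {m J : ℕ} (hJ : m / 2 < J) :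
    diagSum f m = ∑ i ∈ range J, f i * qbinom q (m - i) i :=
  sum_subset (range_subset_range.2 (by omega)) fun i _ hi => by
    rw [mem_range] at hi
    rw [qbinom_of_lt _ (by omega), mul_zero]

lemma diagSum_neg (f : ℕ → K) (m : ℕ) : diagSum (fun i => -f i) m = -diagSum f m := by
  simp only [diagSum, neg_mul, sum_neg_distrib]

lemma diagSum_add_two (f : ℕ → K) (m : ℕ) :
    diagSum f (m + 2)
      = diagSum (fun i => f (i + 1)) m + diagSum (fun i => q ^ i * f i) (m + 1) := by
  rw [diagSum, diagSum, diagSum_eq_sum_range _ (show (m + 1) / 2 < m / 2 + 1 + 1 by omega),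
    show (m + 2) / 2 + 1 = m / 2 + 1 + 1 by omega, sum_range_succ' _ (m / 2 + 1),
    sum_range_succ' _ (m / 2 + 1)]
  have hpascal : ∀ i ∈ range (m / 2 + 1), f (i + 1) * qbinom q (m + 2 - (i + 1)) (i + 1)
      = f (i + 1) * qbinom q (m - i) i
        + q ^ (i + 1) * f (i + 1) * qbinom q (m + 1 - (i + 1)) (i + 1) := by
    intro i hi
    rw [mem_range] at hi
    rw [show m + 2 - (i + 1) = m - i + 1 by omega, show m + 1 - (i + 1) = m - i by omega,
      qbinom_succ_succ]
    ring
  rw [sum_congr rfl hpascal, sum_add_distrib, qbinom_zero_right, qbinom_zero_right, pow_zero]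
  ring

lemma diagSum_add_two' (f : ℕ → K) (m : ℕ) :
    diagSum f (m + 2) = diagSum f (m + 1) + diagSum (fun i => q ^ (m - 2 * i) * f (i + 1)) m := by
  rw [diagSum, diagSum_eq_sum_range f (show (m + 1) / 2 < m / 2 + 1 + 1 by omega), diagSum,
    show (m + 2) / 2 + 1 = m / 2 + 1 + 1 by omega, sum_range_succ' _ (m / 2 + 1),
    sum_range_succ' _ (m / 2 + 1)]
  have hpascal : ∀ i ∈ range (m / 2 + 1), f (i + 1) * qbinom q (m + 2 - (i + 1)) (i + 1)
      = f (i + 1) * qbinom q (m + 1 - (i + 1)) (i + 1)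
        + q ^ (m - 2 * i) * f (i + 1) * qbinom q (m - i) i := by
    intro i hi
    rw [mem_range] at hi
    have h := qbinom_add_succ_succ (m - 2 * i) i
    rw [show m - 2 * i + i + 1 = m + 2 - (i + 1) by omega,
      show m - 2 * i + i = m + 1 - (i + 1) by omega] at h
    rw [h, show m + 1 - (i + 1) = m - i by omega]
    ring
  rw [sum_congr rfl hpascal, sum_add_distrib, qbinom_zero_right, qbinom_zero_right]
  ring

def fib₀ (m : ℕ) : K := diagSum (fun i => (-1) ^ i * q ^ i.choose 2) m

/-- `fib₁ m = qF q 1 (-1) (m + 1)`. -/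
def fib₁ (m : ℕ) : K := diagSum (fun i => (-1) ^ i * q ^ (i + 1).choose 2) m

lemma fib₀_add_two (m : ℕ) : fib₀ (m + 2) = fib₁ (m + 1) - fib₁ m := by
  have hshift : (fun i => (-1 : K) ^ (i + 1) * q ^ (i + 1).choose 2)
      = fun i => -((-1) ^ i * q ^ (i + 1).choose 2) := by
    funext i
    ring
  have hscale : (fun i => q ^ i * ((-1 : K) ^ i * q ^ i.choose 2))
      = fun i => (-1) ^ i * q ^ (i + 1).choose 2 := by
    funext i
    rw [choose_two_succ, pow_add]
    ring
  rw [fib₀, diagSum_add_two, hshift, hscale, diagSum_neg, fib₁, fib₁]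
  ring

lemma fib₁_add_two (m : ℕ) : fib₁ (m + 2) = fib₁ (m + 1) - q ^ (m + 1) * fib₀ m := by
  rw [fib₁, diagSum_add_two', ← fib₁, fib₀, diagSum, diagSum, mul_sum, sub_eq_add_neg,
    ← sum_neg_distrib]
  congr 1
  refine sum_congr rfl fun i hi => ?_
  rw [mem_range] at hi
  have hpow : q ^ (m - 2 * i) * q ^ (i + 1 + 1).choose 2 = q ^ (m + 1) * q ^ i.choose 2 := by
    rw [← pow_add, ← pow_add, choose_two_succ, choose_two_succ]
    congr 1
    omega
  rw [pow_succ]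
  linear_combination -((-1) ^ i * qbinom q (m - i) i) * hpow

lemma fib₀_add_three (m : ℕ) : fib₀ (m + 3) = -(q ^ (m + 1) * fib₀ m) := by
  rw [fib₀_add_two, fib₁_add_two]
  ring

lemma fib₀_add_six (m : ℕ) : fib₀ (m + 6) = q ^ (2 * m + 5) * fib₀ m := by
  rw [fib₀_add_three, fib₀_add_three, show 2 * m + 5 = (m + 3 + 1) + (m + 1) by ring, pow_add]
  ring

lemma fib₀_six_mul_add_one (a : ℕ) : fib₀ (6 * a + 1) = q ^ (a * (6 * a + 1)) := by
  induction a with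
  | zero => simp [fib₀, diagSum, qbinom_zero_right]
  | succ a ih =>
    rw [show 6 * (a + 1) + 1 = 6 * a + 1 + 6 by ring, fib₀_add_six, ih, ← pow_add]
    ring_nf

lemma fib₀_six_mul_add_three (a : ℕ) :
    fib₀ (6 * a + 3) = -q ^ ((2 * a + 1) * (3 * a + 1)) := by
  induction a with
  | zero =>
    rw [show 6 * 0 + 3 = 0 + 3 from rfl, fib₀_add_three]
    simp [fib₀, diagSum, qbinom_zero_right]
  | succ a ih =>
    rw [show 6 * (a + 1) + 3 = 6 * a + 3 + 6 by ring, fib₀_add_six, ih, mul_neg, ← pow_add]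
    ring_nf

lemma fib₀_six_mul_add_five (a : ℕ) : fib₀ (6 * a + 5) = 0 := by
  induction a with
  | zero =>
    rw [show 6 * 0 + 5 = 2 + 3 from rfl, fib₀_add_three]
    simp [fib₀, diagSum, sum_range_succ, qbinom_zero_right, qbinom_self]
  | succ a ih => rw [show 6 * (a + 1) + 5 = 6 * a + 5 + 6 by ring, fib₀_add_six, ih, mul_zero]

lemma qint_div_mul_qbinom (a b : ℕ) :
    qint q (a + b + 2) / qint q (a + 1) * qbinom q (a + 1) (b + 1)
      = qbinom q (a + 1) (b + 1) + q ^ (a + 1) * qbinom q a b := by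
  rcases lt_or_ge a b with h | h
  · rw [qbinom_of_lt _ (by omega), qbinom_of_lt _ h]
    ring
  obtain ⟨r, rfl⟩ := Nat.exists_eq_add_of_le h
  have hsplit : qint q (b + r + b + 2) = qint q (b + r + 1) + q ^ (b + r + 1) * qint q (b + 1) := by
    rw [← qint_add]
    ring_nf
  rw [qbinom_eq_div_of_eq_add (show b + r + 1 = (b + 1) + r by ring),
    qbinom_eq_div_of_eq_add rfl, hsplit, qfact_succ _ (b + r), qfact_succ _ b]
  have := qfact_q_ne_zero b
  have := qfact_q_ne_zero r
  have := qfact_q_ne_zero (b + r)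
  have := qint_q_ne_zero b.succ_ne_zero
  have := qint_q_ne_zero (b + r).succ_ne_zero
  field_simp

lemma qL_add_two (m : ℕ) : qL q 1 (-1) (m + 2) = fib₀ (m + 2) - q ^ (m + 1) * fib₀ m := by
  rw [qL, if_neg (by omega), fib₀, fib₀, diagSum, diagSum,
    show (m + 2) / 2 + 1 = m / 2 + 1 + 1 by omega, sum_range_succ' _ (m / 2 + 1),
    sum_range_succ' _ (m / 2 + 1), mul_sum]
  simp only [← Nat.choose_two_right, one_pow, mul_one]
  have hterm : ∀ i ∈ range (m / 2 + 1),
      q ^ (i + 1).choose 2 * (qint q (m + 2) / qint q (m + 2 - (i + 1)))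
        * qbinom q (m + 2 - (i + 1)) (i + 1) * (-1) ^ (i + 1)
      = (-1) ^ (i + 1) * q ^ (i + 1).choose 2 * qbinom q (m + 2 - (i + 1)) (i + 1)
        - q ^ (m + 1) * ((-1) ^ i * q ^ i.choose 2 * qbinom q (m - i) i) := by
    intro i hi
    rw [mem_range] at hi
    have hratio := qint_div_mul_qbinom (m - i) i
    rw [show m - i + i + 2 = m + 2 by omega, show m - i + 1 = m + 2 - (i + 1) by omega] at hratio
    have hpow : q ^ (i + 1).choose 2 * q ^ (m + 2 - (i + 1)) = q ^ (m + 1) * q ^ i.choose 2 := by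
      rw [← pow_add, ← pow_add, choose_two_succ]
      congr 1
      omega
    rw [mul_assoc _ (qint q (m + 2) / _), hratio, pow_succ]
    linear_combination -((-1) ^ i * qbinom q (m - i) i) * hpow
  rw [sum_congr rfl hterm, sum_sub_distrib, qbinom_zero_right, Nat.sub_zero,
    div_self (qint_q_ne_zero (by omega))]
  ring

lemma qLs_of_ne_zero {n : ℕ} (hn : n ≠ 0) : qLs q 1 (-1) n = qL q 1 (-1) n := if_neg hn

lemma qLs_six_mul_add_one (a : ℕ) : qLs q 1 (-1) (6 * a + 1) = q ^ (a * (6 * a + 1)) := by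
  rw [qLs_of_ne_zero (by omega)]
  rcases a with _ | a
  · simp [qL, qbinom_zero_right, qint_q_ne_zero]
  rw [show 6 * (a + 1) + 1 = 6 * a + 5 + 2 by ring, qL_add_two, fib₀_six_mul_add_five,
    show 6 * a + 5 + 2 = 6 * (a + 1) + 1 by ring, fib₀_six_mul_add_one]
  ring

lemma qLs_six_mul_add_three (a : ℕ) :
    qLs q 1 (-1) (6 * a + 3)
      = -q ^ ((2 * a + 1) * (3 * a + 1)) - q ^ ((2 * a + 1) * (3 * a + 2)) := by
  rw [qLs_of_ne_zero (by omega), show 6 * a + 3 = 6 * a + 1 + 2 by ring, qL_add_two,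
    show 6 * a + 1 + 2 = 6 * a + 3 by ring, fib₀_six_mul_add_three, fib₀_six_mul_add_one,
    ← pow_add]
  ring_nf

lemma qLs_six_mul_add_five (a : ℕ) : qLs q 1 (-1) (6 * a + 5) = q ^ ((a + 1) * (6 * a + 5)) := by
  rw [qLs_of_ne_zero (by omega), show 6 * a + 5 = 6 * a + 3 + 2 by ring, qL_add_two,
    show 6 * a + 3 + 2 = 6 * a + 5 by ring, fib₀_six_mul_add_five, fib₀_six_mul_add_three,
    mul_neg, ← pow_add]
  ring_nf

lemma sum_qLs_block_eq (n a : ℕ) :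
    ∑ r ∈ range 3,
        qLs q 1 (-1) (2 * (3 * a + r) + 1) * qbinomZ (2 * n + 1) (n - (3 * a + r : ℕ))
      = ∑ r ∈ range 2, (pentagonalTerm (2 * n + 1) (2 * a + r : ℕ)
          + pentagonalTerm (2 * n + 1) (-((2 * a + r : ℕ) + 1))) := by
  have hT₀ : pentagonalTerm (2 * n + 1) (2 * a)
      = q ^ (a * (6 * a + 1)) * qbinomZ (2 * n + 1) (n - 3 * a) := by
    rw [pentagonalTerm_eq (e := a * (6 * a + 1)) (m := n - 3 * a) (by push_cast; ring)
      (by push_cast; omega), Even.neg_one_zpow ⟨a, by ring⟩, one_mul]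
  have hT₁ : pentagonalTerm (2 * n + 1) (2 * a + 1)
      = -q ^ ((2 * a + 1) * (3 * a + 2)) * qbinomZ (2 * n + 1) (n - (3 * a + 1)) := by
    rw [pentagonalTerm_eq (e := (2 * a + 1) * (3 * a + 2)) (m := n - (3 * a + 1))
      (by push_cast; ring) (by push_cast; omega), Odd.neg_one_zpow ⟨a, rfl⟩, neg_one_mul]
  have hT₂ : pentagonalTerm (2 * n + 1) (-(2 * a + 1))
      = -q ^ ((2 * a + 1) * (3 * a + 1)) * qbinomZ (2 * n + 1) (n - (3 * a + 1)) := by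
    rw [pentagonalTerm_eq (e := (2 * a + 1) * (3 * a + 1)) (m := n + 3 * a + 2)
      (by push_cast; ring) (by push_cast; omega), Odd.neg_one_zpow ⟨-a - 1, by ring⟩,
      neg_one_mul, qbinomZ_symm]
    push_cast
    ring_nf
  have hT₃ : pentagonalTerm (2 * n + 1) (-(2 * a + 2))
      = q ^ ((a + 1) * (6 * a + 5)) * qbinomZ (2 * n + 1) (n - (3 * a + 2)) := by
    rw [pentagonalTerm_eq (e := (a + 1) * (6 * a + 5)) (m := n + 3 * a + 3)
      (by push_cast; ring) (by push_cast; omega), Even.neg_one_zpow ⟨-a - 1, by ring⟩,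
      one_mul, qbinomZ_symm]
    push_cast
    ring_nf
  simp only [sum_range_succ, sum_range_zero, zero_add]
  rw [show 2 * (3 * a + 0) + 1 = 6 * a + 1 by ring, show 2 * (3 * a + 1) + 1 = 6 * a + 3 by ring,
    show 2 * (3 * a + 2) + 1 = 6 * a + 5 by ring, qLs_six_mul_add_one, qLs_six_mul_add_three,
    qLs_six_mul_add_five]
  push_cast
  rw [add_zero, add_zero, hT₀, hT₁, hT₂, show -((2 * (a : ℤ) + 1) + 1) = -(2 * a + 2) by ring,
    hT₃]
  ring_nf

lemma sum_qLs_mul_qbinomZ (n : ℕ) :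
    ∑ k ∈ range (n + 1), qLs q 1 (-1) (2 * k + 1) * qbinomZ (2 * n + 1) (n - k) = 1 := by
  have hext : ∑ k ∈ range (n + 1), qLs q 1 (-1) (2 * k + 1) * qbinomZ (2 * n + 1) (n - k)
      = ∑ k ∈ range (3 * (n + 1)), qLs q 1 (-1) (2 * k + 1) * qbinomZ (2 * n + 1) (n - k) :=
    sum_subset (range_subset_range.2 (by omega)) fun k _ hk => by
      rw [mem_range] at hk
      rw [qbinomZ_of_neg (by omega), mul_zero]
  rw [hext, sum_range_mul_eq_sum_sum, sum_congr rfl fun a _ => sum_qLs_block_eq n a,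
    ← sum_range_mul_eq_sum_sum (fun t => pentagonalTerm (2 * n + 1) t
      + pentagonalTerm (2 * n + 1) (-(t + 1))), ← pentagonalSum,
    pentagonalSum_eq_of_lt (by omega), pentagonalSum_succ_self]

lemma one_div_qpoch_mul_qpoch (a b : ℕ) :
    1 / (qpoch q a * qpoch q b) = qbinom q (a + b) a / qpoch q (a + b) := by
  have := one_sub_q_ne_zero
  have := qfact_q_ne_zero a
  have := qfact_q_ne_zero b
  have := qfact_q_ne_zero (a + b)
  rw [qbinom_eq_div_of_eq_add rfl, qpoch_eq_pow_mul_qfact, qpoch_eq_pow_mul_qfact,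
    qpoch_eq_pow_mul_qfact, pow_add]
  field_simp

theorem stmt18 (n : ℕ) :
    ∑ k ∈ range (n + 1), qLs q 1 (-1) (2 * k + 1) / (qpoch q (n - k) * qpoch q (n + k + 1))
      = 1 / qpoch q (2 * n + 1) := by
  have hterm : ∀ k ∈ range (n + 1),
      qLs q 1 (-1) (2 * k + 1) / (qpoch q (n - k) * qpoch q (n + k + 1))
        = qLs q 1 (-1) (2 * k + 1) * qbinomZ (2 * n + 1) (n - k) / qpoch q (2 * n + 1) := by
    intro k hk
    rw [mem_range] at hk
    rw [div_eq_mul_one_div, one_div_qpoch_mul_qpoch, show n - k + (n + k + 1) = 2 * n + 1 by omega,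
      show (n : ℤ) - k = (n - k : ℕ) by omega, qbinomZ_natCast, mul_div_assoc]
  rw [sum_congr rfl hterm, ← sum_div, sum_qLs_mul_qbinomZ]

end
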